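/- Let E be a Banach space with a normalized 1-unconditional basis (e_n) with biorthogonal functionals (e_n*). Suppose there exists a sequence (t^{(k)})_{k=1}^∞ of finitely supported vectors in E* with nonnegative coordinates with respect to (e_n*), such that ‖t^{(k)}‖_{E*} ≤ 1 for all k and the sum of the coordinates of t^{(k)} tends to ∞ as k → ∞. Then the E-direct sum X = (⊕_{n=1}^∞ c0)_E of countably many copies of c0 does not have summable Szlenk index. In particular, if E = T is Tsirelson's space with its canonical basis, then T(c0) fails to have summable Szlenk index. -/

import Mathlib

open Filter Topology Set
open scoped ENNReal NNReal

noncomputable section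

/-- The `ε`-Szlenk derivation of a subset of the dual space, w.r.t. the weak* topology. -/
def szlenkDeriv {X : Type*} [NormedAddCommGroup X] [NormedSpace ℝ X] (ε : ℝ)
    (K : Set (StrongDual ℝ X)) : Set (StrongDual ℝ X) :=
  {f | f ∈ K ∧ ∀ U : Set (WeakDual ℝ X), IsOpen U →
    StrongDual.toWeakDual f ∈ U →
    ε < Metric.diam {g | g ∈ K ∧ StrongDual.toWeakDual g ∈ U}}

/-- Iterated Szlenk derivations `ι_{ε₁}⋯ι_{εₙ} K` for a list `[ε₁, …, εₙ]`. -/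
def szlenkDerivList {X : Type*} [NormedAddCommGroup X] [NormedSpace ℝ X] (l : List ℝ)
    (K : Set (StrongDual ℝ X)) : Set (StrongDual ℝ X) :=
  l.foldr szlenkDeriv K

/-- The closed unit ball of the dual space. -/
def dualUnitBall (X : Type*) [NormedAddCommGroup X] [NormedSpace ℝ X] :
    Set (StrongDual ℝ X) :=
  Metric.closedBall 0 1

/-- `X` has summable Szlenk index with constant `M`. -/
def HasSummableSzlenkWith (X : Type*) [NormedAddCommGroup X] [NormedSpace ℝ X] (M : ℝ) : Prop :=
  ∀ l : List ℝ, (∀ ε ∈ l, 0 < ε) → (szlenkDerivList l (dualUnitBall X)).Nonempty → l.sum ≤ M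

/-- `X` has summable Szlenk index. -/
def HasSummableSzlenk (X : Type*) [NormedAddCommGroup X] [NormedSpace ℝ X] : Prop :=
  ∃ M > 0, HasSummableSzlenkWith X M

/-- When some finite iterate of the Szlenk derivation kills the dual ball, the ε-Szlenk index
`Sz(X, ε)` is the least `n : ℕ` with `ι_ε^n B_{X*} = ∅`. -/
def szlenkIdx (X : Type*) [NormedAddCommGroup X] [NormedSpace ℝ X] (ε : ℝ) : ℕ :=
  sInf {n : ℕ | (szlenkDeriv ε)^[n] (dualUnitBall X) = ∅}

/-- `Sz(X) ≤ ω`: the ε-Szlenk index is finite for every ε > 0. -/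
def SzlenkLeOmega (X : Type*) [NormedAddCommGroup X] [NormedSpace ℝ X] : Prop :=
  ∀ ε : ℝ, 0 < ε → ∃ n : ℕ, (szlenkDeriv ε)^[n] (dualUnitBall X) = ∅

/-- `Sz(X) = ω`: finite ε-Szlenk indices, unbounded as ε → 0. -/
def SzlenkEqOmega (X : Type*) [NormedAddCommGroup X] [NormedSpace ℝ X] : Prop :=
  SzlenkLeOmega X ∧ ∀ N : ℕ, ∃ ε : ℝ, 0 < ε ∧ ((szlenkDeriv ε)^[N] (dualUnitBall X)).Nonempty

/-- `X` has Szlenk power type `v`: `log Sz(X,ε)/|log ε| → v` as `ε → 0⁺`. -/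
def HasSzlenkPowerType (X : Type*) [NormedAddCommGroup X] [NormedSpace ℝ X] (v : ℝ) : Prop :=
  Tendsto (fun ε : ℝ => Real.log (szlenkIdx X ε) / |Real.log ε|) (𝓝[>] (0:ℝ)) (𝓝 v)

/-- `(Σᵢ |a i|^p)^{1/p}`, the maximum of the `|a i|` when `p = ∞`. -/
def pNorm (p : ℝ≥0∞) {ι : Type*} [Fintype ι] (a : ι → ℝ) : ℝ :=
  if p = ∞ then ((Finset.univ.sup fun i => ‖a i‖₊ : ℝ≥0) : ℝ)
  else (∑ i, |a i| ^ p.toReal) ^ (1 / p.toReal)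

/-- A normed space `Z` with coordinate functionals `coord` is `C`-asymptotic `ℓ_p`:
every block sequence `x₁, …, xₙ` of finitely supported vectors with successive supports
contained in `[n, ∞)` (1-based basis indexing; index `m : ℕ` is the `(m+1)`-st basis vector)
satisfies `C⁻¹ (Σ‖xⱼ‖^p)^{1/p} ≤ ‖Σ xⱼ‖ ≤ C (Σ‖xⱼ‖^p)^{1/p}`. -/
def IsAsymptoticLp (p : ℝ≥0∞) (C : ℝ) {Z : Type*} [NormedAddCommGroup Z]
    (coord : ℕ → Z → ℝ) : Prop :=
  ∀ (n : ℕ) (x : Fin n → Z),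
    (∀ j, {m | coord m (x j) ≠ 0}.Finite) →
    (∀ j m, coord m (x j) ≠ 0 → n ≤ m + 1) →
    (∀ (j k : Fin n), j < k → ∀ m m', coord m (x j) ≠ 0 → coord m' (x k) ≠ 0 → m < m') →
    C⁻¹ * pNorm p (fun j => ‖x j‖) ≤ ‖∑ j, x j‖ ∧
      ‖∑ j, x j‖ ≤ C * pNorm p (fun j => ‖x j‖)

/-- `(e, e')` is a 1-unconditional Schauder basis of `E` with biorthogonal functionals `e'`. -/
structure IsBasis1Unconditional {E : Type*} [NormedAddCommGroup E] [NormedSpace ℝ E]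
    (e : ℕ → E) (e' : ℕ → StrongDual ℝ E) : Prop where
  biorth : ∀ m n, e' m (e n) = if m = n then 1 else 0
  expansion : ∀ x : E, HasSum (fun n => e' n x • e n) x
  unconditional : ∀ (x : E) (σ : ℕ → ℝ), (∀ n, σ n = 1 ∨ σ n = -1) →
    ∃ y : E, HasSum (fun n => (σ n * e' n x) • e n) y ∧ ‖y‖ = ‖x‖

/-- The basis `e` of `E` is shrinking: the norm of the restriction of any functional to the
closed span of the tail of the basis tends to `0`. -/
def ShrinkingBasis {E : Type*} [NormedAddCommGroup E] [NormedSpace ℝ E] (e : ℕ → E) : Prop :=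
  ∀ f : StrongDual ℝ E,
    Tendsto (fun k =>
      ‖f.comp ((Submodule.span ℝ (e '' Set.Ici k)).topologicalClosure).subtypeL‖)
      atTop (𝓝 0)

/-- `T` realizes `Y` as the `E`-direct sum `(⊕ₙ Xₙ)_E` with respect to the basis `e`. -/
structure IsDirectSumE {E : Type*} [NormedAddCommGroup E] [NormedSpace ℝ E] (e : ℕ → E)
    (X : ℕ → Type*) [∀ n, NormedAddCommGroup (X n)] [∀ n, NormedSpace ℝ (X n)]
    {Y : Type*} [NormedAddCommGroup Y] [NormedSpace ℝ Y]
    (T : Y →ₗ[ℝ] ∀ n, X n) : Prop where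
  range_eq : Set.range T = {x | Summable fun n => ‖x n‖ • e n}
  norm_eq : ∀ y, ‖y‖ = ‖∑' n, ‖T y n‖ • e n‖

/-- `T` realizes `Y` as the c₀-sum `(⊕ₙ Xₙ)_{c₀}`. -/
structure IsC0Sum (X : ℕ → Type*) [∀ n, NormedAddCommGroup (X n)] [∀ n, NormedSpace ℝ (X n)]
    {Y : Type*} [NormedAddCommGroup Y] [NormedSpace ℝ Y] (T : Y →ₗ[ℝ] ∀ n, X n) : Prop where
  range_eq : Set.range T = {x | Tendsto (fun n => ‖x n‖) atTop (𝓝 0)}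
  norm_eq : ∀ y, ‖y‖ = ⨆ n, ‖T y n‖

/-- `T` realizes `Y` as the `ℓ_p`-sum `(⊕ₙ Xₙ)_{ℓ_p}`. -/
structure IsLpSum (p : ℝ) (X : ℕ → Type*) [∀ n, NormedAddCommGroup (X n)]
    [∀ n, NormedSpace ℝ (X n)] {Y : Type*} [NormedAddCommGroup Y] [NormedSpace ℝ Y]
    (T : Y →ₗ[ℝ] ∀ n, X n) : Prop where
  range_eq : Set.range T = {x | Summable fun n => ‖x n‖ ^ p}
  norm_eq : ∀ y, ‖y‖ = (∑' n, ‖T y n‖ ^ p) ^ (1/p)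

/-- `ν` is a norm on `X`. -/
structure IsNormOn {X : Type*} [NormedAddCommGroup X] [NormedSpace ℝ X] (ν : X → ℝ) : Prop where
  add_le : ∀ x y, ν (x + y) ≤ ν x + ν y
  smul_eq : ∀ (a : ℝ) (x : X), ν (a • x) = |a| * ν x
  eq_zero_iff : ∀ x : X, ν x = 0 ↔ x = 0

/-- The dual norm on `X*` corresponding to the (equivalent) norm `ν` on `X`. -/
def dualNormOf {X : Type*} [NormedAddCommGroup X] [NormedSpace ℝ X]
    (ν : X → ℝ) (f : StrongDual ℝ X) : ℝ :=
  sSup {r | ∃ x : X, ν x ≤ 1 ∧ r = |f x|}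

/-- `sup_n C_q(X_n) < ∞`: a common constant `c` with `Sz(Xₙ, ε) ≤ c ε^{-q}`. -/
def PowerTypeBddWith (X : ℕ → Type*) [∀ n, NormedAddCommGroup (X n)]
    [∀ n, NormedSpace ℝ (X n)] (q : ℝ) : Prop :=
  ∃ c : ℝ, ∀ n, ∀ ε ∈ Set.Ioo (0:ℝ) 1, (szlenkIdx (X n) ε : ℝ) ≤ c * ε ^ (-q)

/-- The fast growing hierarchy: `g 0 n = n + 1`, `g (k+1) n = (g k)^[n] n`. -/
def fastGrowing : ℕ → ℕ → ℕ
  | 0, n => n + 1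
  | k+1, n => (fastGrowing k)^[n] n

end

/-!
Let `δ_{n,m} ∈ X*` evaluate the `m`-th coordinate of the `n`-th copy of `c₀`. For a finitely
supported `t = Σₙ aₙ eₙ*` with `aₙ ≥ 0` and `‖t‖ ≤ 1`, every `Σₙ cₙ δ_{n,mₙ}` with `|cₙ| ≤ aₙ`
lies in `B_{X*}`, since its value at `x` is dominated by `t(Σₙ ‖xₙ‖ eₙ)`. As `δ_{n,m} → 0` weak*
when `m → ∞` while `‖δ_{n,m}‖ ≥ 1`, a functional of this form survives the `aₙ`-derivation of the
family in which the `n`-th coefficient is free: it is the weak* limit of the pairs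
`f ± aₙ δ_{n,m}`, which are `2aₙ` apart. Freeing the coordinates of `t` one at a time gives
`0 ∈ ι_{a₁} ⋯ ι_{a_N} B_{X*}`, while `Σₙ aₙ` is unbounded.
-/

section SzlenkTree

variable {X : Type*} [NormedAddCommGroup X] [NormedSpace ℝ X]

lemma szlenkDerivList_subset (l : List ℝ) (K : Set (StrongDual ℝ X)) :
    szlenkDerivList l K ⊆ K := by
  induction l with
  | nil => exact fun _ h => h
  | cons _ _ ih => exact fun _ hf => ih hf.1

lemma mem_szlenkDeriv_of_tendsto {K : Set (StrongDual ℝ X)} (hK : Bornology.IsBounded K)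
    {f : StrongDual ℝ X} (hf : f ∈ K) {ε : ℝ} {h : ℕ → StrongDual ℝ X}
    (hh : Tendsto (fun m => StrongDual.toWeakDual (h m)) atTop (𝓝 0))
    (hε : ∀ m, ε < 2 * ‖h m‖) (hmem : ∀ m, f + h m ∈ K ∧ f - h m ∈ K) :
    f ∈ szlenkDeriv ε K := by
  refine ⟨hf, fun U hU hfU => ?_⟩
  have hplus : Tendsto (fun m => StrongDual.toWeakDual (f + h m)) atTop
      (𝓝 (StrongDual.toWeakDual f)) := by
    simpa using tendsto_const_nhds.add hh
  have hminus : Tendsto (fun m => StrongDual.toWeakDual (f - h m)) atTop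
      (𝓝 (StrongDual.toWeakDual f)) := by
    simpa using tendsto_const_nhds.sub hh
  obtain ⟨m, hmU₁, hmU₂⟩ :=
    ((hplus.eventually (hU.mem_nhds hfU)).and (hminus.eventually (hU.mem_nhds hfU))).exists
  calc ε < 2 * ‖h m‖ := hε m
    _ = dist (f + h m) (f - h m) := by
      rw [dist_eq_norm, add_sub_sub_cancel, ← two_smul ℝ, norm_smul, Real.norm_two]
    _ ≤ _ := Metric.dist_le_diam_of_mem (s := {g | g ∈ K ∧ StrongDual.toWeakDual g ∈ U})
      (hK.subset fun g hg => hg.1)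
      ⟨(hmem m).1, hmU₁⟩ ⟨(hmem m).2, hmU₂⟩

variable {φ : ℕ → ℕ → StrongDual ℝ X} {K : Set (StrongDual ℝ X)} {w : ℕ → ℝ}

lemma sum_smul_mem_szlenkDerivList (hK : Bornology.IsBounded K)
    (hφ₀ : ∀ n, Tendsto (fun m => StrongDual.toWeakDual (φ n m)) atTop (𝓝 0))
    (hφ₁ : ∀ n m, 1 ≤ ‖φ n m‖)
    (hcomb : ∀ (s : Finset ℕ) (c : ℕ → ℝ) (m : ℕ → ℕ), (∀ n ∈ s, |c n| ≤ w n) →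
      ∑ n ∈ s, c n • φ n (m n) ∈ K)
    {L : List ℕ} (hL : L.Nodup) (hw : ∀ n ∈ L, 0 < w n) {s : Finset ℕ} (hs : ∀ n ∈ L, n ∉ s)
    {c : ℕ → ℝ} {m : ℕ → ℕ} (hc : ∀ n ∈ s, |c n| ≤ w n) :
    ∑ n ∈ s, c n • φ n (m n) ∈ szlenkDerivList (L.map w) K := by
  induction L generalizing s c m with
  | nil => exact hcomb s c m hc
  | cons n L ih =>
    obtain ⟨hnL, hL⟩ := List.nodup_cons.mp hL
    have hns : n ∉ s := hs n List.mem_cons_self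
    have hwn : 0 < w n := hw n List.mem_cons_self
    have hwL : ∀ i ∈ L, 0 < w i := fun i hi => hw i (List.mem_cons_of_mem _ hi)
    have perturb : ∀ (v : ℝ) (j : ℕ), |v| ≤ w n → ∑ i ∈ s, c i • φ i (m i) + v • φ n j ∈
        szlenkDerivList (L.map w) K := by
      intro v j hv
      have hmem := ih hL hwL (s := insert n s) (c := Function.update c n v)
        (m := Function.update m n j)
        (fun i hi => by
          simpa [not_or] using ⟨fun h => hnL (h ▸ hi), hs i (List.mem_cons_of_mem _ hi)⟩)
        (fun i hi => by
          rcases Finset.mem_insert.mp hi with rfl | hi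
          · simpa using hv
          · simpa [ne_of_mem_of_not_mem hi hns] using hc i hi)
      rwa [Finset.sum_insert hns, Function.update_self, Function.update_self, add_comm,
        Finset.sum_congr rfl fun i hi => by
          rw [Function.update_of_ne (ne_of_mem_of_not_mem hi hns),
            Function.update_of_ne (ne_of_mem_of_not_mem hi hns)]] at hmem
    refine mem_szlenkDeriv_of_tendsto
      (hK.subset (szlenkDerivList_subset _ K))
      (ih hL hwL (fun i hi => hs i (List.mem_cons_of_mem _ hi)) hc)
      (h := fun j => w n • φ n j) (by simpa using (hφ₀ n).const_smul (w n)) (fun j => ?_)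
      (fun j => ⟨perturb (w n) j (abs_of_pos hwn).le, ?_⟩)
    · rw [norm_smul, Real.norm_of_nonneg hwn.le]
      nlinarith [hφ₁ n j]
    · have hneg := perturb (-w n) j (by rw [abs_neg, abs_of_pos hwn])
      rwa [neg_smul (w n) (φ n j), ← sub_eq_add_neg] at hneg

theorem not_hasSummableSzlenk_of_tendsto_toWeakDual
    (hφ₀ : ∀ n, Tendsto (fun m => StrongDual.toWeakDual (φ n m)) atTop (𝓝 0))
    (hφ₁ : ∀ n m, 1 ≤ ‖φ n m‖) (a : ℕ → ℕ →₀ ℝ) (ha₀ : ∀ k n, 0 ≤ a k n)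
    (ha₁ : ∀ k (s : Finset ℕ) (c : ℕ → ℝ) (m : ℕ → ℕ), (∀ n ∈ s, |c n| ≤ a k n) →
      ‖∑ n ∈ s, c n • φ n (m n)‖ ≤ 1)
    (ha : Tendsto (fun k => (a k).sum fun _ c => c) atTop atTop) :
    ¬ HasSummableSzlenk X := by
  rintro ⟨M, -, hM⟩
  obtain ⟨k, hk⟩ := (ha.eventually (eventually_gt_atTop M)).exists
  have hpos : ∀ n ∈ (a k).support.toList, 0 < a k n := fun n hn =>
    (ha₀ k n).lt_of_ne' (Finsupp.mem_support_iff.mp (Finset.mem_toList.mp hn))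
  have hzero : (0 : StrongDual ℝ X) ∈
      szlenkDerivList ((a k).support.toList.map (a k)) (dualUnitBall X) := by
    simpa [dualUnitBall] using sum_smul_mem_szlenkDerivList Metric.isBounded_closedBall hφ₀ hφ₁
      (fun s c m hc => mem_closedBall_zero_iff.mpr (ha₁ k s c m hc))
      (Finset.nodup_toList _) hpos (s := ∅) (c := 0) (m := 0) (by simp) (by simp)
  have hsum := hM _ (by simpa using fun n hn => hpos n hn) ⟨0, hzero⟩
  rw [Finset.sum_map_toList] at hsum
  exact hk.not_ge hsum

end SzlenkTree

lemma apply_tsum_smul_of_biorth {E : Type*} [NormedAddCommGroup E] [NormedSpace ℝ E]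
    {e : ℕ → E} {e' : ℕ → StrongDual ℝ E} (he : ∀ m n, e' m (e n) = if m = n then 1 else 0)
    {r : ℕ → ℝ} (hr : Summable fun n => r n • e n) (n : ℕ) :
    e' n (∑' j, r j • e j) = r n := by
  rw [ContinuousLinearMap.map_tsum _ hr, tsum_eq_single n fun j hj => by simp [he, Ne.symm hj]]
  simp [he]

lemma ZeroAtInftyContinuousMap.exists_apply_eq_one_norm_le_one (m : ℕ) :
    ∃ d : ZeroAtInftyContinuousMap ℕ ℝ, d m = 1 ∧ ‖d‖ ≤ 1 := by
  refine ⟨⟨⟨fun x => if x = m then 1 else 0, continuous_of_discreteTopology⟩, ?_⟩,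
    if_pos rfl, ?_⟩
  · rw [cocompact_eq_cofinite, Nat.cofinite_eq_atTop]
    refine tendsto_const_nhds.congr' ?_
    filter_upwards [eventually_gt_atTop m] with x hx
    simp [hx.ne']
  · rw [← ZeroAtInftyContinuousMap.norm_toBCF_eq_norm]
    refine (BoundedContinuousFunction.norm_le zero_le_one).2 fun x => ?_
    change ‖if x = m then (1 : ℝ) else 0‖ ≤ 1
    split_ifs <;> norm_num

lemma ZeroAtInftyContinuousMap.abs_apply_le_norm (f : ZeroAtInftyContinuousMap ℕ ℝ) (m : ℕ) :
    |f m| ≤ ‖f‖ := by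
  rw [← Real.norm_eq_abs, ← ZeroAtInftyContinuousMap.norm_toBCF_eq_norm]
  exact f.toBCF.norm_coe_le_norm m

namespace IsDirectSumE

variable {E Y : Type*} [NormedAddCommGroup E] [NormedSpace ℝ E] [NormedAddCommGroup Y]
  [NormedSpace ℝ Y] {e : ℕ → E} {e' : ℕ → StrongDual ℝ E} {X : ℕ → Type*}
  [∀ n, NormedAddCommGroup (X n)] [∀ n, NormedSpace ℝ (X n)] {T : Y →ₗ[ℝ] ∀ n, X n}

lemma summable (hT : IsDirectSumE e X T) (y : Y) : Summable fun n => ‖T y n‖ • e n := by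
  simpa [hT.range_eq] using Set.mem_range_self (f := T) y

lemma exists_apply_eq_single (hT : IsDirectSumE e X T) (he : ∀ n, ‖e n‖ = 1) (n : ℕ)
    (x : X n) : ∃ y, T y = Pi.single n x ∧ ‖y‖ = ‖x‖ := by
  have hx : Pi.single n x ∈ Set.range T := by
    rw [hT.range_eq]
    refine summable_of_ne_finset_zero (s := {n}) fun j hj => ?_
    simp [Pi.single_eq_of_ne (Finset.notMem_singleton.mp hj)]
  obtain ⟨y, hy⟩ := hx
  refine ⟨y, hy, ?_⟩
  rw [hT.norm_eq, hy, tsum_eq_single n fun j hj => by simp [Pi.single_eq_of_ne hj]]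
  simp [norm_smul, he]

variable (he : ∀ m n, e' m (e n) = if m = n then 1 else 0)
include he

lemma norm_apply_le (hT : IsDirectSumE e X T) (y : Y) (n : ℕ) : ‖T y n‖ ≤ ‖e' n‖ * ‖y‖ := by
  have h := (e' n).le_opNorm (∑' j, ‖T y j‖ • e j)
  rwa [apply_tsum_smul_of_biorth he (hT.summable y), ← hT.norm_eq, norm_norm] at h

lemma sum_mul_norm_apply_le (hT : IsDirectSumE e X T) (a : ℕ →₀ ℝ) (y : Y) :
    ∑ n ∈ a.support, a n * ‖T y n‖ ≤ ‖a.sum fun n c => c • e' n‖ * ‖y‖ := by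
  have h := (a.sum fun n c => c • e' n).le_opNorm (∑' j, ‖T y j‖ • e j)
  rw [Finsupp.sum, sum_apply, ← hT.norm_eq] at h
  simp only [smul_apply, apply_tsum_smul_of_biorth he (hT.summable y), smul_eq_mul] at h
  exact (le_abs_self _).trans h

end IsDirectSumE

section C0Sum

variable {E Y : Type*} [NormedAddCommGroup E] [NormedSpace ℝ E] [NormedAddCommGroup Y]
  [NormedSpace ℝ Y] {e : ℕ → E} {e' : ℕ → StrongDual ℝ E}
  {T : Y →ₗ[ℝ] ∀ _ : ℕ, ZeroAtInftyContinuousMap ℕ ℝ}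

lemma IsDirectSumE.exists_eval_strongDual
    (hT : IsDirectSumE e (fun _ => ZeroAtInftyContinuousMap ℕ ℝ) T)
    (he : ∀ m n, e' m (e n) = if m = n then 1 else 0) :
    ∃ φ : ℕ → ℕ → StrongDual ℝ Y, ∀ n m y, φ n m y = T y n m :=
  ⟨fun n m => LinearMap.mkContinuous
    { toFun := fun y => T y n m
      map_add' := fun y z => by simp
      map_smul' := fun r y => by simp }
    ‖e' n‖ fun y => ((T y n).abs_apply_le_norm m).trans (hT.norm_apply_le he y n),
    fun _ _ _ => rfl⟩

variable {φ : ℕ → ℕ → StrongDual ℝ Y} (hφ : ∀ n m y, φ n m y = T y n m)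
include hφ

lemma tendsto_toWeakDual_eval (n : ℕ) :
    Tendsto (fun m => StrongDual.toWeakDual (φ n m)) atTop (𝓝 0) := by
  refine tendsto_iff_forall_eval_tendsto_topDualPairing.mpr fun y => ?_
  have h := (T y n).zero_at_infty'
  rw [cocompact_eq_cofinite, Nat.cofinite_eq_atTop] at h
  convert h using 1
  · ext m
    exact hφ n m y
  · rfl

lemma IsDirectSumE.one_le_norm_eval
    (hT : IsDirectSumE e (fun _ => ZeroAtInftyContinuousMap ℕ ℝ) T) (he : ∀ n, ‖e n‖ = 1)
    (n m : ℕ) : 1 ≤ ‖φ n m‖ := by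
  obtain ⟨d, hd, hd₁⟩ := ZeroAtInftyContinuousMap.exists_apply_eq_one_norm_le_one m
  obtain ⟨y, hy, hy₁⟩ := hT.exists_apply_eq_single he n d
  have h := (φ n m).le_opNorm y
  rw [hφ, hy, Pi.single_eq_same, hd, norm_one, hy₁] at h
  nlinarith [norm_nonneg (φ n m)]

lemma IsDirectSumE.norm_sum_smul_eval_le
    (hT : IsDirectSumE e (fun _ => ZeroAtInftyContinuousMap ℕ ℝ) T)
    (he : ∀ m n, e' m (e n) = if m = n then 1 else 0) {a : ℕ →₀ ℝ} (ha : ∀ n, 0 ≤ a n)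
    {s : Finset ℕ} {c : ℕ → ℝ} (hc : ∀ n ∈ s, |c n| ≤ a n) (m : ℕ → ℕ) :
    ‖∑ n ∈ s, c n • φ n (m n)‖ ≤ ‖a.sum fun n c => c • e' n‖ := by
  refine ContinuousLinearMap.opNorm_le_bound _ (norm_nonneg _) fun y => ?_
  calc ‖(∑ n ∈ s, c n • φ n (m n)) y‖ = |∑ n ∈ s, c n * T y n (m n)| := by
        simp [sum_apply, smul_apply, hφ]
    _ ≤ ∑ n ∈ s, a n * ‖T y n‖ := (Finset.abs_sum_le_sum_abs _ _).trans <|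
        Finset.sum_le_sum fun n hn => by
          rw [abs_mul]
          exact mul_le_mul (hc n hn) ((T y n).abs_apply_le_norm _) (abs_nonneg _) (ha n)
    _ ≤ ∑ n ∈ s ∪ a.support, a n * ‖T y n‖ :=
        Finset.sum_le_sum_of_subset_of_nonneg Finset.subset_union_left
          fun n _ _ => mul_nonneg (ha n) (norm_nonneg _)
    _ = ∑ n ∈ a.support, a n * ‖T y n‖ :=
        (Finset.sum_subset Finset.subset_union_right fun n _ hn => by
          rw [Finsupp.notMem_support_iff.mp hn, zero_mul]).symm
    _ ≤ _ := hT.sum_mul_norm_apply_le he a y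

end C0Sum

theorem directSumE_c0_not_summableSzlenk_general
    (E : Type*) [NormedAddCommGroup E] [NormedSpace ℝ E]
    (e : ℕ → E) (e' : ℕ → StrongDual ℝ E)
    (hb : IsBasis1Unconditional e e') (hnorm : ∀ n, ‖e n‖ = 1)
    (a : ℕ → (ℕ →₀ ℝ)) (ha_nonneg : ∀ k n, 0 ≤ a k n)
    (ha_norm : ∀ k, ‖(a k).sum (fun n c => c • e' n)‖ ≤ 1)
    (ha_tendsto : Tendsto (fun k => (a k).sum (fun _ c => c)) atTop atTop)
    (Y : Type*) [NormedAddCommGroup Y] [NormedSpace ℝ Y]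
    (T : Y →ₗ[ℝ] ∀ _ : ℕ, ZeroAtInftyContinuousMap ℕ ℝ)
    (hT : IsDirectSumE e (fun _ => ZeroAtInftyContinuousMap ℕ ℝ) T) :
    ¬ HasSummableSzlenk Y := by
  obtain ⟨φ, hφ⟩ := hT.exists_eval_strongDual hb.biorth
  exact not_hasSummableSzlenk_of_tendsto_toWeakDual (tendsto_toWeakDual_eval hφ)
    (hT.one_le_norm_eval hφ hnorm) a ha_nonneg
    (fun k _ _ m hc => (hT.norm_sum_smul_eval_le hφ hb.biorth (ha_nonneg k) hc m).trans
      (ha_norm k))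
    ha_tendsto

/-- Suppose there are finitely supported vectors `t⁽ᵏ⁾ = Σₙ (a k) n • eₙ*`
in `E*` with nonnegative coordinates, `‖t⁽ᵏ⁾‖ ≤ 1` and the coordinate sums tending to `∞`.
Then the `E`-direct sum `X = (⊕ₙ c₀)_E` of countably many copies of `c₀` does not have
summable Szlenk index. (For `E = T`, Tsirelson's space, such vectors exist since `T*` is not
isomorphic to `ℓ₁`; hence `T(c₀)` fails to have summable Szlenk index.) -/
theorem directSumE_c0_not_summableSzlenk
    (E : Type*) [NormedAddCommGroup E] [NormedSpace ℝ E] [CompleteSpace E]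
    (e : ℕ → E) (e' : ℕ → StrongDual ℝ E)
    (hb : IsBasis1Unconditional e e') (hnorm : ∀ n, ‖e n‖ = 1)
    (a : ℕ → (ℕ →₀ ℝ)) (ha_nonneg : ∀ k n, 0 ≤ a k n)
    (ha_norm : ∀ k, ‖(a k).sum (fun n c => c • e' n)‖ ≤ 1)
    (ha_tendsto : Tendsto (fun k => (a k).sum (fun _ c => c)) atTop atTop)
    (Y : Type*) [NormedAddCommGroup Y] [NormedSpace ℝ Y] [CompleteSpace Y]
    (T : Y →ₗ[ℝ] ∀ _ : ℕ, ZeroAtInftyContinuousMap ℕ ℝ)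
    (hT : IsDirectSumE e (fun _ => ZeroAtInftyContinuousMap ℕ ℝ) T) :
    ¬ HasSummableSzlenk Y :=
  directSumE_c0_not_summableSzlenk_general E e e' hb hnorm a ha_nonneg ha_norm ha_tendsto Y T hT
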